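/- (Change of variable for the second-order (kinetic) Schrödinger system.) Let d ∈ ℕ and write points of ℝ^d × ℝ^d as z = (x, v). Let b̄(x, v) := (v, −x − 2v) be the critically damped reference drift, so ∇·b̄ ≡ −2d. Let λ : ℝ × ℝ^d × ℝ^d → ℝ be differentiable in t and twice continuously differentiable in (x, v), satisfying for all (t, x, v): ∂_t λ = −2‖∇_V λ‖² − ⟨∇_{(X,V)} λ, b̄⟩ − 2Δ_V λ. Let ρ : ℝ × ℝ^d × ℝ^d → (0, ∞) be differentiable in t and twice continuously differentiable in (x, v), satisfying the kinetic Fokker–Planck equation for all (t, x, v): ∂_t ρ + ∇_X·(ρ·v) + ∇_V·(ρ·(−x + 4∇_V λ − 2v − 2∇_V log ρ)) = 0. Then η := log ρ − λ satisfies for all (t, x, v): ∂_t η = −⟨∇_{(X,V)} η, b̄⟩ − ∇·b̄ + 2‖∇_V η‖² + 2Δ_V η, i.e. ∂_t η = −⟨∇_X η, v⟩ + ⟨∇_V η, x + 2v⟩ + 2d + 2‖∇_V η‖² + 2Δ_V η. -/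

import Mathlib

/-!
Dividing the Fokker–Planck equation by `ρ` turns it into an equation for `log ρ`: the product
rule reads `∇·(ρ w) = ρ (⟨∇ log ρ, w⟩ + ∇·w)`, and the drift `-x + 4∇_V λ - 2v - 2∇_V log ρ` has
`v`-divergence `4Δ_V λ - 2d - 2Δ_V log ρ`. Subtracting the equation for `λ`, the Laplacians combine
into `2Δ_V η` and the quadratic terms complete the square `2‖∇_V log ρ - ∇_V λ‖² = 2‖∇_V η‖²`.
-/

open scoped RealInnerProductSpace

/-- The Laplacian of `f : ℝ^d → ℝ` at `x`: trace of the second Fréchet derivative. -/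
noncomputable def lapE {d : ℕ} (f : EuclideanSpace ℝ (Fin d) → ℝ)
    (x : EuclideanSpace ℝ (Fin d)) : ℝ :=
  ∑ i, fderiv ℝ (fderiv ℝ f) x (EuclideanSpace.single i 1) (EuclideanSpace.single i 1)

/-- The divergence of a vector field `w : ℝ^d → ℝ^d` at `x`. -/
noncomputable def divergE {d : ℕ} (w : EuclideanSpace ℝ (Fin d) → EuclideanSpace ℝ (Fin d))
    (x : EuclideanSpace ℝ (Fin d)) : ℝ :=
  ∑ i, ⟪fderiv ℝ w x (EuclideanSpace.single i 1), EuclideanSpace.single i 1⟫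

/-- Gradient in the position variables. -/
noncomputable def gradX {d : ℕ} (g : EuclideanSpace ℝ (Fin d) → EuclideanSpace ℝ (Fin d) → ℝ)
    (x v : EuclideanSpace ℝ (Fin d)) : EuclideanSpace ℝ (Fin d) :=
  gradient (fun y => g y v) x

/-- Gradient in the velocity variables. -/
noncomputable def gradV {d : ℕ} (g : EuclideanSpace ℝ (Fin d) → EuclideanSpace ℝ (Fin d) → ℝ)
    (x v : EuclideanSpace ℝ (Fin d)) : EuclideanSpace ℝ (Fin d) :=
  gradient (fun u => g x u) v

/-- Laplacian in the velocity variables. -/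
noncomputable def lapV {d : ℕ} (g : EuclideanSpace ℝ (Fin d) → EuclideanSpace ℝ (Fin d) → ℝ)
    (x v : EuclideanSpace ℝ (Fin d)) : ℝ :=
  lapE (fun u => g x u) v

/-- Divergence in the position variables. -/
noncomputable def divX {d : ℕ}
    (w : EuclideanSpace ℝ (Fin d) → EuclideanSpace ℝ (Fin d) → EuclideanSpace ℝ (Fin d))
    (x v : EuclideanSpace ℝ (Fin d)) : ℝ :=
  divergE (fun y => w y v) x

/-- Divergence in the velocity variables. -/
noncomputable def divV {d : ℕ}
    (w : EuclideanSpace ℝ (Fin d) → EuclideanSpace ℝ (Fin d) → EuclideanSpace ℝ (Fin d))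
    (x v : EuclideanSpace ℝ (Fin d)) : ℝ :=
  divergE (fun u => w x u) v

section Gradient
variable {F : Type*} [NormedAddCommGroup F] [InnerProductSpace ℝ F] [CompleteSpace F]

theorem gradient_fun_sub {f g : F → ℝ} {x : F} (hf : DifferentiableAt ℝ f x)
    (hg : DifferentiableAt ℝ g x) :
    gradient (fun y => f y - g y) x = gradient f x - gradient g x := by
  simp only [gradient, fderiv_fun_sub hf hg, map_sub]

theorem gradient_log {f : F → ℝ} {x : F} (hf : DifferentiableAt ℝ f x) (hx : f x ≠ 0) :
    gradient (fun y => Real.log (f y)) x = (f x)⁻¹ • gradient f x := by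
  simp only [gradient, (hf.hasFDerivAt.log hx).fderiv, map_smul]

theorem ContDiff.differentiable_gradient {f : F → ℝ} (hf : ContDiff ℝ 2 f) :
    Differentiable ℝ (gradient f) :=
  (InnerProductSpace.toDual ℝ F).symm.toContinuousLinearEquiv.differentiable.comp
    ((hf.fderiv_right (m := 1) (by norm_num)).differentiable one_ne_zero)

end Gradient

section Slices
variable {𝕜 : Type*} [NontriviallyNormedField 𝕜] {E₁ E₂ G : Type*}
  [NormedAddCommGroup E₁] [NormedSpace 𝕜 E₁] [NormedAddCommGroup E₂] [NormedSpace 𝕜 E₂]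
  [NormedAddCommGroup G] [NormedSpace 𝕜 G] {n : WithTop ℕ∞} {f : E₁ × E₂ → G}

theorem ContDiff.comp_prodMk_left (hf : ContDiff 𝕜 n f) (x : E₁) :
    ContDiff 𝕜 n fun u => f (x, u) :=
  hf.comp (contDiff_const.prodMk contDiff_id)

theorem ContDiff.comp_prodMk_right (hf : ContDiff 𝕜 n f) (u : E₂) :
    ContDiff 𝕜 n fun y => f (y, u) :=
  hf.comp (contDiff_id.prodMk contDiff_const)

end Slices

section EuclideanCalculus
variable {d : ℕ}
local notation "E" => EuclideanSpace ℝ (Fin d)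

theorem sum_inner_single_mul_inner_single (a b : E) :
    ∑ i, ⟪a, EuclideanSpace.single i 1⟫ * ⟪b, EuclideanSpace.single i 1⟫ = ⟪a, b⟫ := by
  simpa [real_inner_comm b] using (EuclideanSpace.basisFun (Fin d) ℝ).sum_inner_mul_inner a b

theorem divergE_const (c x : E) : divergE (fun _ => c) x = 0 := by
  simp [divergE]

theorem divergE_id (x : E) : divergE (fun y : E => y) x = d := by
  simp [divergE]

theorem divergE_fun_add {w₁ w₂ : E → E} {x : E} (h₁ : DifferentiableAt ℝ w₁ x)
    (h₂ : DifferentiableAt ℝ w₂ x) :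
    divergE (fun y => w₁ y + w₂ y) x = divergE w₁ x + divergE w₂ x := by
  simp [divergE, fderiv_fun_add h₁ h₂, inner_add_left, Finset.sum_add_distrib]

theorem divergE_fun_sub {w₁ w₂ : E → E} {x : E} (h₁ : DifferentiableAt ℝ w₁ x)
    (h₂ : DifferentiableAt ℝ w₂ x) :
    divergE (fun y => w₁ y - w₂ y) x = divergE w₁ x - divergE w₂ x := by
  simp [divergE, fderiv_fun_sub h₁ h₂, inner_sub_left, Finset.sum_sub_distrib]

theorem divergE_fun_const_smul (c : ℝ) {w : E → E} {x : E} (h : DifferentiableAt ℝ w x) :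
    divergE (fun y => c • w y) x = c * divergE w x := by
  simp [divergE, fderiv_fun_const_smul h, inner_smul_left, Finset.mul_sum]

theorem divergE_fun_smul {f : E → ℝ} {w : E → E} {x : E} (hf : DifferentiableAt ℝ f x)
    (hw : DifferentiableAt ℝ w x) :
    divergE (fun y => f y • w y) x = ⟪gradient f x, w x⟫ + f x * divergE w x := by
  simp only [divergE, fderiv_fun_smul hf hw, FunLike.coe_add, Pi.add_apply,
    FunLike.coe_smul, Pi.smul_apply, ContinuousLinearMap.smulRight_apply, inner_add_left,
    real_inner_smul_left, Finset.sum_add_distrib, ← Finset.mul_sum, add_comm (f x * _)]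
  rw [← sum_inner_single_mul_inner_single]
  simp only [inner_gradient_left]

theorem divergE_gradient (f : E → ℝ) (x : E) : divergE (gradient f) x = lapE f x := by
  have hgrad : gradient f = (InnerProductSpace.toDual ℝ E).symm ∘ fderiv ℝ f := rfl
  rw [divergE, lapE, hgrad, LinearIsometryEquiv.comp_fderiv]
  exact Finset.sum_congr rfl fun i _ => InnerProductSpace.toDual_symm_apply

theorem divergE_fun_smul_eq_mul_log {f : E → ℝ} {w : E → E} {x : E}
    (hf : DifferentiableAt ℝ f x) (hx : f x ≠ 0) (hw : DifferentiableAt ℝ w x) :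
    divergE (fun y => f y • w y) x
      = f x * (⟪gradient (fun y => Real.log (f y)) x, w x⟫ + divergE w x) := by
  rw [divergE_fun_smul hf hw, gradient_log hf hx, real_inner_smul_left]
  field_simp

theorem lapE_fun_sub {f g : E → ℝ} (hf : ContDiff ℝ 2 f) (hg : ContDiff ℝ 2 g) (x : E) :
    lapE (fun y => f y - g y) x = lapE f x - lapE g x := by
  have hgrad : gradient (fun y => f y - g y) = fun y => gradient f y - gradient g y :=
    funext fun y => gradient_fun_sub (hf.differentiable two_ne_zero y)
      (hg.differentiable two_ne_zero y)
  rw [← divergE_gradient, ← divergE_gradient, ← divergE_gradient, hgrad,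
    divergE_fun_sub (hf.differentiable_gradient x) (hg.differentiable_gradient x)]

theorem divX_smul_velocity {f : E → E → ℝ} {x v : E}
    (hf : DifferentiableAt ℝ (fun y => f y v) x) (hx : f x v ≠ 0) :
    divX (fun y u => f y u • u) x v = f x v * ⟪gradX (fun y u => Real.log (f y u)) x v, v⟫ := by
  rw [divX, divergE_fun_smul_eq_mul_log hf hx (differentiableAt_const v), divergE_const,
    add_zero, gradX]

theorem divV_fun_smul_eq_mul_log {f : E → E → ℝ} {w : E → E → E} {x v : E}
    (hf : DifferentiableAt ℝ (fun u => f x u) v) (hv : f x v ≠ 0)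
    (hw : DifferentiableAt ℝ (fun u => w x u) v) :
    divV (fun y u => f y u • w y u) x v
      = f x v * (⟪gradV (fun y u => Real.log (f y u)) x v, w x v⟫ + divV w x v) :=
  divergE_fun_smul_eq_mul_log hf hv hw

theorem divV_drift (a b c : ℝ) {g h : E → E → ℝ} {x v : E}
    (hg : ContDiff ℝ 2 (fun u => g x u)) (hh : ContDiff ℝ 2 (fun u => h x u)) :
    divV (fun y u => -y + a • gradV g y u - b • u - c • gradV h y u) x v
      = a * lapV g x v - b * d - c * lapV h x v := by
  have hgrad_g : DifferentiableAt ℝ (fun u => gradV g x u) v := hg.differentiable_gradient v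
  have hgrad_h : DifferentiableAt ℝ (fun u => gradV h x u) v := hh.differentiable_gradient v
  have h₁ : DifferentiableAt ℝ (fun u => a • gradV g x u) v := hgrad_g.const_smul a
  have h₂ : DifferentiableAt ℝ (fun u : E => b • u) v := differentiableAt_id.const_smul b
  have h₃ : DifferentiableAt ℝ (fun u => c • gradV h x u) v := hgrad_h.const_smul c
  have h₀₁ : DifferentiableAt ℝ (fun u => -x + a • gradV g x u) v :=
    (differentiableAt_const _).add h₁
  have h₀₁₂ : DifferentiableAt ℝ (fun u => -x + a • gradV g x u - b • u) v := h₀₁.sub h₂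
  rw [divV, divergE_fun_sub h₀₁₂ h₃, divergE_fun_sub h₀₁ h₂,
    divergE_fun_add (differentiableAt_const _) h₁, divergE_const,
    divergE_fun_const_smul _ hgrad_g, divergE_fun_const_smul _ hgrad_h,
    divergE_fun_const_smul _ differentiableAt_fun_id, divergE_id]
  simp only [gradV, divergE_gradient, lapV, zero_add]

theorem differentiableAt_drift (a b c : ℝ) {g h : E → E → ℝ} {x v : E}
    (hg : ContDiff ℝ 2 (fun u => g x u)) (hh : ContDiff ℝ 2 (fun u => h x u)) :
    DifferentiableAt ℝ (fun u => -x + a • gradV g x u - b • u - c • gradV h x u) v :=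
  (((differentiableAt_const _).add ((hg.differentiable_gradient v).const_smul a)).sub
    (differentiableAt_id.const_smul b)).sub ((hh.differentiable_gradient v).const_smul c)

theorem divV_smul_drift (a b c : ℝ) {f g h : E → E → ℝ} {x v : E}
    (hf : DifferentiableAt ℝ (fun u => f x u) v) (hv : f x v ≠ 0)
    (hg : ContDiff ℝ 2 (fun u => g x u)) (hh : ContDiff ℝ 2 (fun u => h x u)) :
    divV (fun y u => f y u • (-y + a • gradV g y u - b • u - c • gradV h y u)) x v
      = f x v * (⟪gradV (fun y u => Real.log (f y u)) x v,
          -x + a • gradV g x v - b • v - c • gradV h x v⟫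
        + (a * lapV g x v - b * d - c * lapV h x v)) := by
  rw [divV_fun_smul_eq_mul_log hf hv (differentiableAt_drift a b c hg hh), divV_drift a b c hg hh]

theorem gradX_fun_sub {f g : E → E → ℝ} {x v : E} (hf : DifferentiableAt ℝ (fun y => f y v) x)
    (hg : DifferentiableAt ℝ (fun y => g y v) x) :
    gradX (fun y u => f y u - g y u) x v = gradX f x v - gradX g x v :=
  gradient_fun_sub hf hg

theorem gradV_fun_sub {f g : E → E → ℝ} {x v : E} (hf : DifferentiableAt ℝ (fun u => f x u) v)
    (hg : DifferentiableAt ℝ (fun u => g x u) v) :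
    gradV (fun y u => f y u - g y u) x v = gradV f x v - gradV g x v :=
  gradient_fun_sub hf hg

theorem lapV_fun_sub {f g : E → E → ℝ} {x : E} (hf : ContDiff ℝ 2 (fun u => f x u))
    (hg : ContDiff ℝ 2 (fun u => g x u)) (v : E) :
    lapV (fun y u => f y u - g y u) x v = lapV f x v - lapV g x v :=
  lapE_fun_sub hf hg v

end EuclideanCalculus

/-- `r, r', l'` stand for `ρ, ∂ₜρ, ∂ₜλ`; `A, B` for `∇_X λ, ∇_V λ`; `GX, GV` for
`∇_X log ρ, ∇_V log ρ`; `Ll, Lg` for `Δ_V λ, Δ_V log ρ`; and `n` for the dimension `d`. -/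
theorem kinetic_hopfCole_identity {F : Type*} [NormedAddCommGroup F] [InnerProductSpace ℝ F]
    {r r' l' n Ll Lg : ℝ} {x v A B GX GV : F} (hr : r ≠ 0)
    (hFP : r' + r * ⟪GX, v⟫
      + r * (⟪GV, -x + (4 : ℝ) • B - (2 : ℝ) • v - (2 : ℝ) • GV⟫ + (4 * Ll - 2 * n - 2 * Lg)) = 0)
    (hl : l' = -2 * ‖B‖ ^ 2 - (⟪A, v⟫ + ⟪B, -x - (2 : ℝ) • v⟫) - 2 * Ll) :
    r' / r - l'
      = -⟪GX - A, v⟫ + ⟪GV - B, x + (2 : ℝ) • v⟫ + 2 * n + 2 * ‖GV - B‖ ^ 2 + 2 * (Lg - Ll) := by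
  have hquot : r' / r
      = -⟪GX, v⟫ - ⟪GV, -x + (4 : ℝ) • B - (2 : ℝ) • v - (2 : ℝ) • GV⟫
        - (4 * Ll - 2 * n - 2 * Lg) := by
    field_simp
    linarith
  rw [hquot, hl]
  simp only [← real_inner_self_eq_norm_sq, inner_sub_left, inner_sub_right, inner_add_right,
    inner_neg_right, real_inner_smul_right, real_inner_comm GV B]
  ring

/-- Change of variable for the second-order (kinetic) Schrödinger system: if `λ` solves
`∂ₜλ = -2‖∇_Vλ‖² - ⟨∇_{(X,V)}λ, b̄⟩ - 2Δ_Vλ` with `b̄(x,v) = (v, -x-2v)`, and `ρ > 0`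
solves the kinetic Fokker–Planck equation
`∂ₜρ + ∇_X·(ρv) + ∇_V·(ρ(-x + 4∇_Vλ - 2v - 2∇_V log ρ)) = 0`, then `η := log ρ - λ`
satisfies `∂ₜη = -⟨∇_Xη, v⟩ + ⟨∇_Vη, x+2v⟩ + 2d + 2‖∇_Vη‖² + 2Δ_Vη`. -/
theorem stmt18 {d : ℕ}
    (l : ℝ → EuclideanSpace ℝ (Fin d) → EuclideanSpace ℝ (Fin d) → ℝ)
    (hlt : ∀ x v, Differentiable ℝ fun t => l t x v)
    (hlxv : ∀ t, ContDiff ℝ 2 fun p : EuclideanSpace ℝ (Fin d) × EuclideanSpace ℝ (Fin d) =>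
      l t p.1 p.2)
    (hl : ∀ t x v, deriv (fun s => l s x v) t
      = -2 * ‖gradV (l t) x v‖ ^ 2
        - (⟪gradX (l t) x v, v⟫ + ⟪gradV (l t) x v, -x - (2 : ℝ) • v⟫)
        - 2 * lapV (l t) x v)
    (ρ : ℝ → EuclideanSpace ℝ (Fin d) → EuclideanSpace ℝ (Fin d) → ℝ)
    (hρpos : ∀ t x v, 0 < ρ t x v)
    (hρt : ∀ x v, Differentiable ℝ fun t => ρ t x v)
    (hρxv : ∀ t, ContDiff ℝ 2 fun p : EuclideanSpace ℝ (Fin d) × EuclideanSpace ℝ (Fin d) =>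
      ρ t p.1 p.2)
    (hFP : ∀ t x v, deriv (fun s => ρ s x v) t
      + divX (fun y u => ρ t y u • u) x v
      + divV (fun y u => ρ t y u •
          (-y + (4 : ℝ) • gradV (l t) y u - (2 : ℝ) • u
            - (2 : ℝ) • gradV (fun a b => Real.log (ρ t a b)) y u)) x v = 0) :
    ∀ t x v, deriv (fun s => Real.log (ρ s x v) - l s x v) t
      = -⟪gradX (fun y u => Real.log (ρ t y u) - l t y u) x v, v⟫
        + ⟪gradV (fun y u => Real.log (ρ t y u) - l t y u) x v, x + (2 : ℝ) • v⟫
        + 2 * d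
        + 2 * ‖gradV (fun y u => Real.log (ρ t y u) - l t y u) x v‖ ^ 2
        + 2 * lapV (fun y u => Real.log (ρ t y u) - l t y u) x v := by
  intro t x v
  have hρ0 : ρ t x v ≠ 0 := (hρpos t x v).ne'
  have hlog : ContDiff ℝ 2 fun p : EuclideanSpace ℝ (Fin d) × EuclideanSpace ℝ (Fin d) =>
      Real.log (ρ t p.1 p.2) := (hρxv t).log fun p => (hρpos t p.1 p.2).ne'
  have hρX : ContDiff ℝ 2 fun y => ρ t y v := (hρxv t).comp_prodMk_right v
  have hρV : ContDiff ℝ 2 fun u => ρ t x u := (hρxv t).comp_prodMk_left x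
  have hlX : ContDiff ℝ 2 fun y => l t y v := (hlxv t).comp_prodMk_right v
  have hlV : ContDiff ℝ 2 fun u => l t x u := (hlxv t).comp_prodMk_left x
  have hlogX : ContDiff ℝ 2 fun y => Real.log (ρ t y v) := hlog.comp_prodMk_right v
  have hlogV : ContDiff ℝ 2 fun u => Real.log (ρ t x u) := hlog.comp_prodMk_left x
  have hFPlog := hFP t x v
  rw [divX_smul_velocity (hρX.differentiable two_ne_zero x) hρ0,
    divV_smul_drift 4 2 2 (hρV.differentiable two_ne_zero v) hρ0 hlV hlogV] at hFPlog
  have hη : deriv (fun s => Real.log (ρ s x v) - l s x v) t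
      = deriv (fun s => ρ s x v) t / ρ t x v - deriv (fun s => l s x v) t :=
    (((hρt x v t).hasDerivAt.log hρ0).sub (hlt x v t).hasDerivAt).deriv
  rw [hη, gradX_fun_sub (hlogX.differentiable two_ne_zero x) (hlX.differentiable two_ne_zero x),
    gradV_fun_sub (hlogV.differentiable two_ne_zero v) (hlV.differentiable two_ne_zero v),
    lapV_fun_sub hlogV hlV]
  exact kinetic_hopfCole_identity hρ0 hFPlog (hl t x v)
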